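/- arXiv:2502.12615 — 2 statements merged into one kernel-verified Lean document; each statement's English description precedes it below -/
import Mathlib

section
/- For every integer k ≥ 1, every 0 ≤ q ≤ k and every n ≥ 0, one has F_k^q(n+1) = F_k^q(n) if and only if D_k(n) is nonempty and its least element is strictly less than q. In particular F_k(n+1) = F_k(n) iff 0 ∈ D_k(n). -/
/-!
Represent `D_k(n)` by its increasing list of ranks. Adding `1 = A_{k,0}` to `n` and propagating the
carries `A_{k,p} + A_{k,p+k-1} = A_{k,p+k}` yields the canonical decomposition of `n + 1`; it is
unique because a canonical list with largest rank `p` sums to a value in `[A_{k,p}, A_{k,p+1})`.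

Let `G_j(n) = Σ_{p ∈ D_k(n)} A_{k,p-j}` (`shiftSum k j n`), with truncated `p - j`, so that ranks
below `j` contribute `A_{k,0} = 1`. Then `G_1(n+1) + G_k(n) = n + 1`, which is Hofstadter's
recursion, and `G_1 ∘ G_j = G_{j+1}` for `j < k`; hence `F_k^q = G_q` for `q ≤ k`. Passing from
`D_k(n)` to `D_k(n+1)`, shifting by `q ≤ k` preserves the carry identity, so `G_q(n+1) - G_q(n)`
is `A_{k,m+1-q} - A_{k,m-q}` if the least rank `m` of `D_k(n)` is below `k`, and `1` otherwise:
it vanishes exactly when `m < q`.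
-/

/-- Fuel-limited version of Hofstadter's recursion:
`Fa k fuel n` equals `F_k n` whenever `fuel ≥ n`. -/
def Fa (k : ℕ) : ℕ → ℕ → ℕ
  | 0, _ => 0
  | _ + 1, 0 => 0
  | fuel + 1, n + 1 => (n + 1) - (Fa k fuel)^[k] n

/-- Hofstadter's function `F_k` : `F k 0 = 0` and `F k n = n - (F k)^[k] (n-1)`
for `n ≥ 1` (since `F_k m ≤ m`, the fuel `n` is always sufficient). -/
def F (k : ℕ) (n : ℕ) : ℕ := Fa k n n

/-- The function `L_k n = n + (F k)^[k-1] n`. -/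
def L (k : ℕ) (n : ℕ) : ℕ := n + (F k)^[k - 1] n

/-- The Fibonacci-like sequence `A_{k,p}` : `A k p = p+1` for `p < k`,
and `A k p = A k (p-1) + A k (p-k)` for `p ≥ k`.
(The `max k 1` only makes termination evident; in all statements `k ≥ 1`.) -/
def A (k : ℕ) : ℕ → ℕ
  | 0 => 1
  | p + 1 => if p + 1 < k then p + 2 else A k p + A k (p + 1 - max k 1)
termination_by p => p
decreasing_by all_goals omega

/-- `D` is a canonical `k`-decomposition of `n` : distinct elements are at
distance at least `k`, and the corresponding `A`-numbers sum to `n`. -/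
def IsCanonDecomp (k n : ℕ) (D : Finset ℕ) : Prop :=
  (∀ p ∈ D, ∀ q ∈ D, p ≠ q → k ≤ Nat.dist p q) ∧ ∑ p ∈ D, A k p = n

theorem Set.EqOn.iterate {α : Type*} {f g : α → α} {s : Set α} (h : Set.EqOn f g s)
    (hf : Set.MapsTo f s s) (n : ℕ) : Set.EqOn f^[n] g^[n] s := by
  induction n with
  | zero => exact fun _ _ => rfl
  | succ n ih =>
    intro x hx
    rw [Function.iterate_succ_apply, Function.iterate_succ_apply, ← h hx]
    exact ih (hf hx)

theorem Finset.exists_lt_and_forall_le_iff {α : Type*} [LinearOrder α] {s : Finset α} {b : α} :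
    (∃ a ∈ s, a < b ∧ ∀ c ∈ s, a ≤ c) ↔ ∃ a ∈ s, a < b := by
  refine ⟨fun ⟨a, ha, hab, _⟩ => ⟨a, ha, hab⟩, fun ⟨a, ha, hab⟩ => ?_⟩
  exact ⟨s.min' ⟨a, ha⟩, s.min'_mem _, (s.min'_le a ha).trans_lt hab,
    fun c hc => s.min'_le c hc⟩

namespace Hofstadter

variable {k : ℕ}

theorem A_zero (k : ℕ) : A k 0 = 1 := by
  rw [A]

theorem A_of_le (hk : 1 ≤ k) {p : ℕ} (hp : p ≤ k) : A k p = p + 1 := by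
  induction p with
  | zero => exact A_zero k
  | succ p ih =>
    rw [A]
    split_ifs with h
    · rfl
    · rw [show p + 1 - max k 1 = 0 by omega, ih (by omega), A_zero]

/-- Truncated subtraction makes the recurrence hold for every `p`: below `k` it reads
`A (p + 1) = A p + A 0`. -/
theorem A_succ (hk : 1 ≤ k) (p : ℕ) : A k (p + 1) = A k p + A k (p + 1 - k) := by
  rw [A]
  split_ifs with h
  · rw [A_of_le hk (by omega), show p + 1 - k = 0 by omega, A_zero]
  · rw [max_eq_left hk]

theorem A_pred_add (hk : 1 ≤ k) {p : ℕ} (hp : 1 ≤ p) : A k (p - 1) + A k (p - k) = A k p := by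
  obtain ⟨p, rfl⟩ := Nat.exists_eq_add_of_le' hp
  rw [A_succ hk, Nat.add_sub_cancel]

theorem A_pos (hk : 1 ≤ k) (p : ℕ) : 0 < A k p := by
  induction p with
  | zero => simp [A_zero]
  | succ p ih => rw [A_succ hk]; omega

theorem A_strictMono (hk : 1 ≤ k) : StrictMono (A k) :=
  strictMono_nat_of_lt_succ fun p => by
    have := A_pos hk (p + 1 - k)
    rw [A_succ hk]
    omega

def sumA (k : ℕ) (l : List ℕ) : ℕ := (l.map (A k)).sum

@[simp] theorem sumA_nil : sumA k [] = 0 := rfl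

@[simp] theorem sumA_cons (x : ℕ) (l : List ℕ) : sumA k (x :: l) = A k x + sumA k l := by
  simp [sumA]

theorem sumA_append (l l' : List ℕ) : sumA k (l ++ l') = sumA k l + sumA k l' := by
  simp [sumA]

theorem map_sub_map_sub (l : List ℕ) (i j : ℕ) :
    (l.map (· - i)).map (· - j) = l.map (· - (i + j)) := by
  simp [Function.comp_def, Nat.sub_sub]

def IsCanonList (k : ℕ) (l : List ℕ) : Prop := l.Pairwise fun a b => a + k ≤ b

@[simp] theorem isCanonList_nil : IsCanonList k [] := List.Pairwise.nil

@[simp] theorem isCanonList_cons {x : ℕ} {l : List ℕ} :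
    IsCanonList k (x :: l) ↔ (∀ y ∈ l, x + k ≤ y) ∧ IsCanonList k l :=
  List.pairwise_cons

theorem IsCanonList.map_sub {l : List ℕ} (hl : IsCanonList k l) {j : ℕ}
    (hj : ∀ x ∈ l, j ≤ x) :
    IsCanonList k (l.map (· - j)) := by
  refine List.pairwise_map.2 (hl.imp_of_mem fun ha _ hab => ?_)
  have := hj _ ha
  omega

theorem IsCanonList.eq_cons_of_exists_lt {l : List ℕ} (hl : IsCanonList k l) {q : ℕ}
    (h : ∃ p ∈ l, p < q) : ∃ m t, l = m :: t ∧ m < q ∧ ∀ y ∈ t, m + k ≤ y := by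
  obtain ⟨p, hp, hpq⟩ := h
  cases l with
  | nil => simp at hp
  | cons m t =>
    simp only [isCanonList_cons] at hl
    refine ⟨m, t, rfl, ?_, hl.1⟩
    rcases List.mem_cons.1 hp with rfl | hp
    · exact hpq
    · have := hl.1 p hp
      omega

theorem isCanonList_append_singleton {f : List ℕ} {p : ℕ} :
    IsCanonList k (f ++ [p]) ↔ (∀ x ∈ f, x + k ≤ p) ∧ IsCanonList k f := by
  simp [IsCanonList, List.pairwise_append, and_comm]

theorem sumA_map_pred_add_sumA_map_sub (hk : 1 ≤ k) {l : List ℕ} (hl : ∀ x ∈ l, 1 ≤ x) :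
    sumA k (l.map (· - 1)) + sumA k (l.map (· - k)) = sumA k l := by
  induction l with
  | nil => rfl
  | cons x t ih =>
    simp only [List.forall_mem_cons] at hl
    have := A_pred_add hk hl.1
    simp only [List.map_cons, sumA_cons]
    have := ih hl.2
    omega

/-- Prepends rank `p` to a canonical list of ranks `≥ p + k - 1`, merging
`A p + A (p + k - 1) = A (p + k)` as long as possible. -/
def carry (k : ℕ) : ℕ → List ℕ → List ℕ
  | p, [] => [p]
  | p, x :: t => if x + 1 = p + k then carry k (x + 1) t else p :: x :: t

theorem isCanonList_carry {l : List ℕ} (hl : IsCanonList k l) {p : ℕ}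
    (hp : ∀ x ∈ l, p + k ≤ x + 1) :
    IsCanonList k (carry k p l) ∧ ∀ y ∈ carry k p l, p ≤ y := by
  induction l generalizing p with
  | nil => simp [carry]
  | cons x t ih =>
    simp only [isCanonList_cons] at hl
    simp only [List.forall_mem_cons] at hp
    rw [carry]
    split_ifs with hx
    · obtain ⟨hc, hle⟩ := ih (p := x + 1) hl.2 fun y hy => by have := hl.1 y hy; omega
      exact ⟨hc, fun y hy => by have := hle y hy; omega⟩
    · refine ⟨?_, ?_⟩
      · simp only [isCanonList_cons, List.forall_mem_cons]
        exact ⟨⟨by omega, fun y hy => by have := hl.1 y hy; omega⟩, hl⟩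
      · simp only [List.forall_mem_cons]
        exact ⟨le_rfl, by omega, fun y hy => by have := hl.1 y hy; omega⟩

theorem sumA_map_sub_carry (hk : 1 ≤ k) {q : ℕ} (hq : q ≤ k) {l : List ℕ}
    (hl : IsCanonList k l) {p : ℕ} (hp1 : 1 ≤ p) (hp : ∀ x ∈ l, p + k ≤ x + 1) :
    sumA k ((carry k p l).map (· - q)) = A k (p - q) + sumA k (l.map (· - q)) := by
  induction l generalizing p with
  | nil => simp [carry]
  | cons x t ih =>
    simp only [isCanonList_cons] at hl
    rw [carry]
    split_ifs with hx
    · have hmerge := A_pred_add hk (show 1 ≤ x + 1 - q by omega)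
      rw [show x + 1 - q - 1 = x - q by omega, show x + 1 - q - k = p - q by omega] at hmerge
      rw [ih hl.2 (by omega) fun y hy => by have := hl.1 y hy; omega]
      simp only [List.map_cons, sumA_cons]
      omega
    · simp

def succDecomp (k : ℕ) : List ℕ → List ℕ
  | [] => [0]
  | m :: t => if m < k then carry k (m + 1) t else 0 :: m :: t

theorem isCanonList_succDecomp {l : List ℕ} (hl : IsCanonList k l) :
    IsCanonList k (succDecomp k l) := by
  cases l with
  | nil => simp [succDecomp]
  | cons m t =>
    simp only [isCanonList_cons] at hl
    rw [succDecomp]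
    split_ifs with hm
    · exact (isCanonList_carry hl.2 fun y hy => by have := hl.1 y hy; omega).1
    · simp only [isCanonList_cons, List.forall_mem_cons]
      exact ⟨⟨by omega, fun y hy => by have := hl.1 y hy; omega⟩, hl.1, hl.2⟩

theorem sumA_map_sub_succDecomp_of_exists_lt (hk : 1 ≤ k) {q : ℕ} (hq : q ≤ k) {l : List ℕ}
    (hl : IsCanonList k l) (h : ∃ p ∈ l, p < q) :
    sumA k ((succDecomp k l).map (· - q)) = sumA k (l.map (· - q)) := by
  obtain ⟨m, t, rfl, hm, ht⟩ := hl.eq_cons_of_exists_lt h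
  simp only [isCanonList_cons] at hl
  rw [succDecomp, if_pos (by omega),
    sumA_map_sub_carry hk hq hl.2 (by omega) fun y hy => by have := ht y hy; omega]
  simp [show m + 1 - q = 0 by omega, show m - q = 0 by omega]

theorem sumA_map_sub_succDecomp_of_forall_le (hk : 1 ≤ k) {q : ℕ} (hq : q ≤ k) {l : List ℕ}
    (hl : IsCanonList k l) (h : ∀ p ∈ l, q ≤ p) :
    sumA k ((succDecomp k l).map (· - q)) = sumA k (l.map (· - q)) + 1 := by
  cases l with
  | nil => simp [succDecomp, A_zero]
  | cons m t =>
    simp only [isCanonList_cons] at hl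
    have hm := h m List.mem_cons_self
    rw [succDecomp]
    split_ifs with hmk
    · rw [sumA_map_sub_carry hk hq hl.2 (by omega) fun y hy => by have := hl.1 y hy; omega,
        show m + 1 - q = m - q + 1 by omega, A_succ hk, show m - q + 1 - k = 0 by omega, A_zero]
      simp only [List.map_cons, sumA_cons]
      omega
    · simp only [List.map_cons, sumA_cons, Nat.zero_sub, A_zero]
      omega

theorem sumA_succDecomp (hk : 1 ≤ k) {l : List ℕ} (hl : IsCanonList k l) :
    sumA k (succDecomp k l) = sumA k l + 1 := by
  simpa using sumA_map_sub_succDecomp_of_forall_le hk (Nat.zero_le k) hl fun p _ => Nat.zero_le p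

theorem sumA_lt_A (hk : 1 ≤ k) {l : List ℕ} (hl : IsCanonList k l) {P : ℕ}
    (hP : ∀ x ∈ l, x < P) : sumA k l < A k P := by
  induction l using List.reverseRecOn generalizing P with
  | nil => exact A_pos hk P
  | append_singleton f p ih =>
    rw [isCanonList_append_singleton] at hl
    have hf := ih hl.2 (P := p + 1 - k) fun x hx => by have := hl.1 x hx; omega
    have hpP := (A_strictMono hk).monotone (show p + 1 ≤ P from hP p (by simp))
    have := A_succ hk p
    rw [sumA_append, sumA_cons, sumA_nil]
    omega

theorem A_le_sumA_append_singleton_lt (hk : 1 ≤ k) {f : List ℕ} {p : ℕ}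
    (hl : IsCanonList k (f ++ [p])) :
    A k p ≤ sumA k (f ++ [p]) ∧ sumA k (f ++ [p]) < A k (p + 1) := by
  refine ⟨by simp [sumA_append], sumA_lt_A hk hl fun x hx => ?_⟩
  rcases List.mem_append.1 hx with hx | hx
  · have := (isCanonList_append_singleton.1 hl).1 x hx
    omega
  · simp_all

theorem le_of_sumA_append_singleton_le (hk : 1 ≤ k) {a b : List ℕ} {r s : ℕ}
    (ha : IsCanonList k (a ++ [r])) (hb : IsCanonList k (b ++ [s]))
    (h : sumA k (a ++ [r]) ≤ sumA k (b ++ [s])) : r ≤ s := by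
  have h₁ := (A_le_sumA_append_singleton_lt hk ha).1
  have h₂ := (A_le_sumA_append_singleton_lt hk hb).2
  exact Nat.lt_succ_iff.1 ((A_strictMono hk).lt_iff_lt.1 (show A k r < A k (s + 1) by omega))

theorem eq_nil_of_sumA_eq_zero (hk : 1 ≤ k) {l : List ℕ} (h : sumA k l = 0) : l = [] := by
  cases l with
  | nil => rfl
  | cons x t =>
    have := A_pos hk x
    simp only [sumA_cons] at h
    omega

theorem eq_of_sumA_eq (hk : 1 ≤ k) {l l' : List ℕ} (hl : IsCanonList k l)
    (hl' : IsCanonList k l') (h : sumA k l = sumA k l') : l = l' := by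
  induction l using List.reverseRecOn generalizing l' with
  | nil => exact (eq_nil_of_sumA_eq_zero hk h.symm).symm
  | append_singleton f p ih =>
    rcases List.eq_nil_or_concat l' with rfl | ⟨f', p', rfl⟩
    · exact eq_nil_of_sumA_eq_zero hk h
    rw [List.concat_eq_append] at hl' h ⊢
    obtain rfl := le_antisymm (le_of_sumA_append_singleton_le hk hl hl' h.le)
      (le_of_sumA_append_singleton_le hk hl' hl h.ge)
    rw [ih (isCanonList_append_singleton.1 hl).2 (isCanonList_append_singleton.1 hl').2
      (by simpa [sumA_append] using h)]

def decomp (k : ℕ) : ℕ → List ℕ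
  | 0 => []
  | n + 1 => succDecomp k (decomp k n)

theorem isCanonList_decomp (n : ℕ) : IsCanonList k (decomp k n) := by
  induction n with
  | zero => exact isCanonList_nil
  | succ n ih => exact isCanonList_succDecomp ih

theorem sumA_decomp (hk : 1 ≤ k) (n : ℕ) : sumA k (decomp k n) = n := by
  induction n with
  | zero => rfl
  | succ n ih => rw [decomp, sumA_succDecomp hk (isCanonList_decomp n), ih]

theorem decomp_sumA (hk : 1 ≤ k) {l : List ℕ} (hl : IsCanonList k l) :
    decomp k (sumA k l) = l :=
  eq_of_sumA_eq hk (isCanonList_decomp _) hl (sumA_decomp hk _)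

theorem mem_decomp_iff (hk : 1 ≤ k) {n : ℕ} {D : Finset ℕ} (hD : IsCanonDecomp k n D)
    {p : ℕ} :
    p ∈ decomp k n ↔ p ∈ D := by
  have hcanon : IsCanonList k D.sort :=
    (Finset.sortedLT_sort D).pairwise.imp_of_mem fun ha hb hab => by
      have := hD.1 _ ((Finset.mem_sort _).1 ha) _ ((Finset.mem_sort _).1 hb) hab.ne
      unfold Nat.dist at this
      omega
  have hsum : sumA k D.sort = n := by
    rw [sumA, ((Finset.sort_perm_toList D _).map (A k)).sum_eq, Finset.sum_map_toList, hD.2]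
  rw [← hsum, decomp_sumA hk hcanon, Finset.mem_sort]

def shiftSum (k j n : ℕ) : ℕ := sumA k ((decomp k n).map (· - j))

theorem shiftSum_zero (hk : 1 ≤ k) (n : ℕ) : shiftSum k 0 n = n := by
  simp [shiftSum, sumA_decomp hk]

theorem shiftSum_one_shiftSum (hk : 1 ≤ k) {j : ℕ} (hj : j < k) (n : ℕ) :
    shiftSum k 1 (shiftSum k j n) = shiftSum k (j + 1) n := by
  unfold shiftSum
  have hl := isCanonList_decomp (k := k) n
  generalize decomp k n = l at hl ⊢
  by_cases h : ∃ p ∈ l, p < j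
  · -- `(m :: t).map (· - j)` need not be canonical, but its value is that of the successor
    -- of `t.map (· - j)`
    obtain ⟨m, t, rfl, hm, ht⟩ := hl.eq_cons_of_exists_lt h
    have htj := (isCanonList_cons.1 hl).2.map_sub (j := j) fun y hy => by have := ht y hy; omega
    have hsucc : sumA k ((m :: t).map (· - j)) = sumA k (succDecomp k (t.map (· - j))) := by
      rw [sumA_succDecomp hk htj]
      simp [show m - j = 0 by omega, A_zero, add_comm]
    rw [hsucc, decomp_sumA hk (isCanonList_succDecomp htj),
      sumA_map_sub_succDecomp_of_forall_le hk hk htj, map_sub_map_sub]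
    · simp [show m - (j + 1) = 0 by omega, A_zero, add_comm]
    · simp only [List.mem_map]
      rintro _ ⟨y, hy, rfl⟩
      have := ht y hy
      omega
  · push Not at h
    rw [decomp_sumA hk (hl.map_sub h), map_sub_map_sub]

theorem iterate_shiftSum_one (hk : 1 ≤ k) {j : ℕ} (hj : j ≤ k) (n : ℕ) :
    (shiftSum k 1)^[j] n = shiftSum k j n := by
  induction j with
  | zero => exact (shiftSum_zero hk n).symm
  | succ j ih =>
    rw [Function.iterate_succ_apply', ih (by omega), shiftSum_one_shiftSum hk (by omega)]

theorem shiftSum_one_succ_add_shiftSum (hk : 1 ≤ k) (n : ℕ) :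
    shiftSum k 1 (n + 1) + shiftSum k k n = n + 1 := by
  unfold shiftSum
  conv_rhs => rw [← sumA_decomp hk n]
  have hl := isCanonList_decomp (k := k) n
  rw [decomp]
  generalize decomp k n = l at hl ⊢
  by_cases h : ∃ p ∈ l, p < 1
  · obtain ⟨m, t, rfl, hm, ht⟩ := hl.eq_cons_of_exists_lt h
    have hsplit := sumA_map_pred_add_sumA_map_sub hk (l := t) fun y hy => by have := ht y hy; omega
    rw [sumA_map_sub_succDecomp_of_exists_lt hk hk hl h]
    simp only [List.map_cons, sumA_cons, show m = 0 by omega, Nat.zero_sub, A_zero]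
    omega
  · push Not at h
    rw [sumA_map_sub_succDecomp_of_forall_le hk hk hl h, add_right_comm,
      sumA_map_pred_add_sumA_map_sub hk h]

theorem shiftSum_succ_eq_iff (hk : 1 ≤ k) {q : ℕ} (hq : q ≤ k) (n : ℕ) :
    shiftSum k q (n + 1) = shiftSum k q n ↔ ∃ p ∈ decomp k n, p < q := by
  unfold shiftSum
  rw [decomp]
  by_cases h : ∃ p ∈ decomp k n, p < q
  · simpa [h] using sumA_map_sub_succDecomp_of_exists_lt hk hq (isCanonList_decomp n) h
  · push Not at h
    simp only [sumA_map_sub_succDecomp_of_forall_le hk hq (isCanonList_decomp n) h]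
    simpa using h

theorem Fa_le (k f n : ℕ) : Fa k f n ≤ n := by
  rcases f with _ | f <;> rcases n with _ | n <;> simp [Fa]

theorem Fa_eq_F (k f : ℕ) : ∀ m ≤ f, Fa k f m = F k m := by
  induction f using Nat.strong_induction_on with
  | _ f ih =>
    rintro (_ | m) hm
    · rcases f with _ | f <;> rfl
    obtain ⟨f, rfl⟩ : ∃ f', f = f' + 1 := ⟨f - 1, by omega⟩
    have hiter : ∀ g, m ≤ g → g ≤ f → (Fa k g)^[k] m = (F k)^[k] m := fun g hmg hgf =>
      Set.EqOn.iterate (s := Set.Iic g) (fun x hx => ih g (by omega) x hx)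
        (fun x hx => (Fa_le k g x).trans hx) k (Set.mem_Iic.2 hmg)
    show m + 1 - (Fa k f)^[k] m = m + 1 - (Fa k m)^[k] m
    rw [hiter f (by omega) le_rfl, hiter m le_rfl (by omega)]

theorem F_le (k n : ℕ) : F k n ≤ n := Fa_le k n n

theorem F_succ (k n : ℕ) : F k (n + 1) = n + 1 - (F k)^[k] n := by
  show n + 1 - (Fa k n)^[k] n = _
  rw [Set.EqOn.iterate (s := Set.Iic n) (Fa_eq_F k n) (fun x hx => (Fa_le k n x).trans hx) k
    (Set.mem_Iic.2 le_rfl)]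

theorem F_eq_shiftSum_one (hk : 1 ≤ k) : F k = shiftSum k 1 := by
  funext n
  induction n using Nat.strong_induction_on with
  | _ n ih =>
    rcases n with _ | n
    · rfl
    have hiter : (F k)^[k] n = (shiftSum k 1)^[k] n :=
      Set.EqOn.iterate (s := Set.Iic n) (fun x hx => ih x (Nat.lt_succ_of_le hx))
        (fun x hx => (F_le k x).trans hx) k (Set.mem_Iic.2 le_rfl)
    have := shiftSum_one_succ_add_shiftSum hk n
    rw [F_succ, hiter, iterate_shiftSum_one hk le_rfl]
    omega

theorem F_iterate_eq_shiftSum (hk : 1 ≤ k) {q : ℕ} (hq : q ≤ k) : (F k)^[q] = shiftSum k q :=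
  funext fun n => by rw [F_eq_shiftSum_one hk, iterate_shiftSum_one hk hq]

end Hofstadter

open Hofstadter

/-- For `0 ≤ q ≤ k` : `F_k^q (n+1) = F_k^q n` iff the canonical
`k`-decomposition of `n` is nonempty with least element `< q`.
In particular `F_k (n+1) = F_k n` iff `0 ∈ D_k(n)`. -/
theorem F_iterate_flat_iff_rank_lt (k : ℕ) (hk : 1 ≤ k) (q : ℕ) (hqk : q ≤ k)
    (n : ℕ) (D : Finset ℕ) (hD : IsCanonDecomp k n D) :
    ((F k)^[q] (n + 1) = (F k)^[q] n ↔ ∃ p ∈ D, p < q ∧ ∀ r ∈ D, p ≤ r) ∧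
    (F k (n + 1) = F k n ↔ 0 ∈ D) := by
  have hflat : ∀ j ≤ k, (F k)^[j] (n + 1) = (F k)^[j] n ↔ ∃ p ∈ D, p < j := fun j hj => by
    simp only [F_iterate_eq_shiftSum hk hj, shiftSum_succ_eq_iff hk hj, mem_decomp_iff hk hD]
  refine ⟨by rw [hflat q hqk, Finset.exists_lt_and_forall_le_iff], ?_⟩
  simpa using hflat 1 hk
end

section
/- For every integer k ≥ 2 and every n ≥ 0, A_{k, n⊖1} − α_k·A_{k,n} = Σ_r c(r)·(r^{−1} − α_k)·r^n, where the sum ranges over the k distinct complex roots r of Q_k(X) = X^k − X^{k−1} − 1, c(r) = r^k / (k·r − (k−1)), and ⊖ is truncated subtraction on ℕ. (The term corresponding to r = β_k vanishes since β_k^{−1} = α_k.) -/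
open Polynomial

/-- The polynomial `Q_k(X) = X^k - X^{k-1} - 1` over `ℂ`. -/
noncomputable def Q (k : ℕ) : Polynomial ℂ := X ^ k - X ^ (k - 1) - 1


/-! The roots `r` of `Q k` are simple and satisfy `c(r) = r^(2k-2) / Q'(r)`. The residue sums
`s_j = Σ_r r^j / Q'(r)` obey the recurrence `s_{j+k} = s_{j+k-1} + s_j` of `Q k`, and Euler's
identity (the coefficient of `X^(k-1)` in the Lagrange interpolant of `X^j` at the roots) shows
that they start with `k - 1` zeros followed by a one. Running the recurrence gives
`s_{n+2k-2} = A_{k,n}` and `s_{n+2k-3} = A_{k,n⊖1}`, and the right-hand side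
is `s_{n+2k-3} - α s_{n+2k-2}`. -/

open Finset

lemma A_zero (k : ℕ) : A k 0 = 1 := by rw [A]

lemma A_of_lt {k p : ℕ} (h : p < k) : A k p = p + 1 := by
  cases p with
  | zero => exact A_zero k
  | succ q => rw [A, if_pos h]

lemma A_succ {k : ℕ} (hk : 1 ≤ k) (p : ℕ) : A k (p + 1) = A k p + A k (p + 1 - k) := by
  rw [A, max_eq_left hk]
  split_ifs with h
  · rw [A_of_lt (by omega : p < k), Nat.sub_eq_zero_of_le h.le, A_zero]
  · rfl

namespace Polynomial

variable {K : Type*} [Field K]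

lemma nodup_roots_of_eval_derivative_ne_zero {p : K[X]} (hp : p ≠ 0)
    (h : ∀ r, p.IsRoot r → (derivative p).eval r ≠ 0) : p.roots.Nodup := by
  classical
  refine Multiset.nodup_iff_count_le_one.2 fun r => ?_
  rw [count_roots]
  by_contra! hr
  obtain ⟨hroot, hder⟩ := (one_lt_rootMultiplicity_iff_isRoot hp).1 hr
  exact h r hroot hder

variable [DecidableEq K]

lemma eval_derivative_eq_prod_sub {p : K[X]} (hm : p.Monic) (hs : p.Splits)
    (hnd : p.roots.Nodup) {r : K} (hr : r ∈ p.roots.toFinset) :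
    (derivative p).eval r = ∏ t ∈ p.roots.toFinset.erase r, (r - t) := by
  have hnodal : Lagrange.nodal p.roots.toFinset id = p := by
    rw [Lagrange.nodal_eq, prod_eq_multiset_prod, Multiset.toFinset_val, hnd.dedup]
    exact (hs.eq_prod_roots_of_monic hm).symm
  have := Lagrange.eval_nodal_derivative_eval_node_eq (v := id) hr
  rwa [hnodal, Lagrange.eval_nodal] at this

theorem sum_roots_pow_div_eval_derivative {p : K[X]} (hm : p.Monic) (hs : p.Splits)
    (hnd : p.roots.Nodup) {j : ℕ} (hj : j < p.natDegree) :
    ∑ r ∈ p.roots.toFinset, r ^ j / (derivative p).eval r =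
      if j = p.natDegree - 1 then 1 else 0 := by
  have hcard : #p.roots.toFinset = p.natDegree := by
    rw [Multiset.toFinset_card_of_nodup hnd, hs.natDegree_eq_card_roots]
  have hdeg : ((X : K[X]) ^ j).degree < #p.roots.toFinset := by
    rw [degree_X_pow, hcard]; exact_mod_cast hj
  calc ∑ r ∈ p.roots.toFinset, r ^ j / (derivative p).eval r
      = ∑ r ∈ p.roots.toFinset,
          (X ^ j).eval (id r) / ∏ t ∈ p.roots.toFinset.erase r, (id r - id t) :=
        sum_congr rfl fun r hr => by simp [eval_derivative_eq_prod_sub hm hs hnd hr]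
    _ = (X ^ j : K[X]).coeff (#p.roots.toFinset - 1) :=
        (Lagrange.coeff_eq_sum (Set.injOn_id _) hdeg).symm
    _ = if j = p.natDegree - 1 then 1 else 0 := by
        rw [coeff_X_pow, hcard]; exact if_congr eq_comm rfl rfl

end Polynomial

section Q

variable {k : ℕ}

lemma Q_monic (hk : 2 ≤ k) : (Q k).Monic := by
  unfold Q; monicity!
  simp [show k ≠ 0 by omega, show k ≠ k - 1 by omega]; rfl

lemma Q_natDegree (hk : 2 ≤ k) : (Q k).natDegree = k := by
  unfold Q; compute_degree!
  simp [show k ≠ 0 by omega, show k ≠ k - 1 by omega]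

lemma eval_Q (r : ℂ) : (Q k).eval r = r ^ k - r ^ (k - 1) - 1 := by
  simp [Q]

lemma eval_derivative_Q (hk : 2 ≤ k) (r : ℂ) :
    (derivative (Q k)).eval r = r ^ (k - 2) * (k * r - (k - 1)) := by
  obtain ⟨a, rfl⟩ : ∃ a, k = a + 2 := ⟨k - 2, by omega⟩
  simp [Q]
  ring

lemma pow_eq_of_isRoot_Q {r : ℂ} (hr : (Q k).IsRoot r) : r ^ k = r ^ (k - 1) + 1 := by
  rw [IsRoot, eval_Q] at hr
  linear_combination hr

lemma ne_zero_of_isRoot_Q (hk : 2 ≤ k) {r : ℂ} (hr : (Q k).IsRoot r) : r ≠ 0 := by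
  rintro rfl
  have := pow_eq_of_isRoot_Q hr
  simp [show k ≠ 0 by omega, show k - 1 ≠ 0 by omega] at this

/-- The only critical point of `Q k` besides `0` is the real number `(k-1)/k ∈ [0,1)`,
where `Q k = x^(k-1) (x - 1) - 1 < 0`. -/
lemma mul_sub_ne_zero_of_isRoot_Q (hk : 2 ≤ k) {r : ℂ} (hr : (Q k).IsRoot r) :
    (k : ℂ) * r - (k - 1) ≠ 0 := by
  intro hcrit
  have hk0 : (k : ℝ) ≠ 0 := by positivity
  set x : ℝ := (k - 1) / k
  have hrx : r = x := by
    have : (k : ℂ) ≠ 0 := by exact_mod_cast hk0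
    push_cast [x]
    field_simp
    linear_combination hcrit
  have hx0 : 0 ≤ x :=
    div_nonneg (by linarith [show (2 : ℝ) ≤ k by exact_mod_cast hk]) (by positivity)
  have hx1 : x - 1 < 0 := by
    rw [div_sub_one hk0]; exact div_neg_of_neg_of_pos (by linarith) (by positivity)
  have hQx : x ^ (k - 1) * (x - 1) - 1 = 0 := by
    have := pow_eq_of_isRoot_Q hr
    rw [hrx, ← pow_sub_one_mul (by omega : k ≠ 0)] at this
    exact_mod_cast (by linear_combination this : ((x : ℂ) ^ (k - 1) * (x - 1) - 1 = 0))
  nlinarith [pow_nonneg hx0 (k - 1)]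

lemma eval_derivative_Q_ne_zero (hk : 2 ≤ k) {r : ℂ} (hr : (Q k).IsRoot r) :
    (derivative (Q k)).eval r ≠ 0 := by
  rw [eval_derivative_Q hk]
  exact mul_ne_zero (pow_ne_zero _ (ne_zero_of_isRoot_Q hk hr)) (mul_sub_ne_zero_of_isRoot_Q hk hr)

lemma Q_roots_nodup (hk : 2 ≤ k) : (Q k).roots.Nodup :=
  nodup_roots_of_eval_derivative_ne_zero (Q_monic hk).ne_zero
    fun _ => eval_derivative_Q_ne_zero hk

lemma isRoot_of_mem_roots_Q {r : ℂ} (hr : r ∈ (Q k).roots.toFinset) : (Q k).IsRoot r :=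
  (mem_roots'.1 (Multiset.mem_toFinset.1 hr)).2

end Q

noncomputable def residueSum (k j : ℕ) : ℂ :=
  ∑ r ∈ (Q k).roots.toFinset, r ^ j / (derivative (Q k)).eval r

lemma residueSum_add_self (k m : ℕ) :
    residueSum k (m + k) = residueSum k (m + (k - 1)) + residueSum k m := by
  simp only [residueSum, ← sum_add_distrib, ← add_div]
  refine sum_congr rfl fun r hr => ?_
  rw [pow_add, pow_add, pow_eq_of_isRoot_Q (isRoot_of_mem_roots_Q hr)]
  ring

lemma residueSum_of_lt {k j : ℕ} (hk : 2 ≤ k) (hj : j < k) :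
    residueSum k j = if j = k - 1 then 1 else 0 := by
  have := sum_roots_pow_div_eval_derivative (Q_monic hk) (IsAlgClosed.splits _) (Q_roots_nodup hk)
    (j := j) (by rwa [Q_natDegree hk])
  rwa [Q_natDegree hk] at this

/-- `A k` shifted right by `2k - 2`; thanks to the truncated subtraction the `k - 1` values
before `A k 0` are also `A k 0 = 1`, and they are preceded by `k - 1` zeros. -/
def paddedA (k j : ℕ) : ℕ := if j < k - 1 then 0 else A k (j + 2 - 2 * k)

lemma paddedA_add_self {k : ℕ} (hk : 1 ≤ k) (m : ℕ) :
    paddedA k (m + k) = paddedA k (m + (k - 1)) + paddedA k m := by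
  unfold paddedA
  rw [if_neg (by omega), if_neg (by omega)]
  split_ifs with hm
  · rw [Nat.sub_eq_zero_of_le (by omega : m + k + 2 ≤ 2 * k),
      Nat.sub_eq_zero_of_le (by omega : m + (k - 1) + 2 ≤ 2 * k), add_zero]
  · rw [show m + k + 2 - 2 * k = m + 1 - k + 1 by omega,
      show m + (k - 1) + 2 - 2 * k = m + 1 - k by omega,
      show m + 2 - 2 * k = m + 1 - k + 1 - k by omega]
    exact A_succ hk _

lemma residueSum_eq_paddedA {k : ℕ} (hk : 2 ≤ k) (j : ℕ) : residueSum k j = paddedA k j := by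
  induction j using Nat.strong_induction_on with
  | _ j ih =>
    rcases lt_or_ge j k with hj | hj
    · rw [residueSum_of_lt hk hj, paddedA]
      rcases (by omega : j < k - 1 ∨ j = k - 1) with hj | rfl
      · simp [hj, hj.ne]
      · simp [Nat.sub_eq_zero_of_le (by omega : k - 1 + 2 ≤ 2 * k), A_zero]
    · obtain ⟨m, rfl⟩ : ∃ m, j = m + k := ⟨j - k, by omega⟩
      rw [residueSum_add_self, ih _ (by omega), ih _ (by omega), paddedA_add_self (by omega),
        Nat.cast_add]

lemma secondary_term_eq {k : ℕ} (hk : 2 ≤ k) (α : ℂ) (n : ℕ) {r : ℂ}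
    (hr : (Q k).IsRoot r) :
    r ^ k / (k * r - (k - 1)) * (r⁻¹ - α) * r ^ n =
      r ^ (n + (2 * k - 3)) / (derivative (Q k)).eval r
        - α * (r ^ (n + (2 * k - 2)) / (derivative (Q k)).eval r) := by
  obtain ⟨a, rfl⟩ : ∃ a, k = a + 2 := ⟨k - 2, by omega⟩
  have hr0 := ne_zero_of_isRoot_Q hk hr
  have hcrit := mul_sub_ne_zero_of_isRoot_Q hk hr
  rw [eval_derivative_Q hk, show 2 * (a + 2) - 3 = 2 * a + 1 by omega,
    show 2 * (a + 2) - 2 = 2 * a + 2 by omega, show a + 2 - 2 = a by omega]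
  field_simp
  ring

theorem A_diff_eq_sum_secondary_general (k : ℕ) (hk : 2 ≤ k) (α : ℝ) (n : ℕ) :
    ((A k (n - 1) : ℂ) - (α : ℂ) * (A k n : ℂ)) =
      ∑ r ∈ (Q k).roots.toFinset,
        r ^ k / ((k : ℂ) * r - ((k : ℂ) - 1)) * (r⁻¹ - (α : ℂ)) * r ^ n := by
  rw [sum_congr rfl fun r hr => secondary_term_eq hk α n (isRoot_of_mem_roots_Q hr),
    sum_sub_distrib, ← mul_sum]
  change _ = residueSum k _ - α * residueSum k _
  rw [residueSum_eq_paddedA hk, residueSum_eq_paddedA hk, paddedA, paddedA,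
    if_neg (by omega), if_neg (by omega), show n + (2 * k - 3) + 2 - 2 * k = n - 1 by omega,
    show n + (2 * k - 2) + 2 - 2 * k = n by omega]

/-- For `k ≥ 2`, with `α_k` the root of `X^k + X - 1` in `(0,1)` :
`A_{k, n⊖1} - α_k·A_{k,n} = Σ_r c(r)·(r⁻¹ - α_k)·r^n` over the roots `r` of
`Q_k`, where `c(r) = r^k / (k·r - (k-1))`. -/
theorem A_diff_eq_sum_secondary (k : ℕ) (hk : 2 ≤ k) (α : ℝ)
    (hα : α ∈ Set.Ioo (0 : ℝ) 1) (hαroot : α ^ k + α - 1 = 0) (n : ℕ) :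
    ((A k (n - 1) : ℂ) - (α : ℂ) * (A k n : ℂ)) =
      ∑ r ∈ (Q k).roots.toFinset,
        r ^ k / ((k : ℂ) * r - ((k : ℂ) - 1)) * (r⁻¹ - (α : ℂ)) * r ^ n :=
  A_diff_eq_sum_secondary_general k hk α n
end
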